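/- In any B_{q,t}-module datum, for every k ∈ ℤ the following identity of operators V₁ → V₁ holds: φ d₋ T₁^{−1} z₁^{k} d₊ = d₋ T₁^{−1} z₁^{k} d₊ φ + q^{−1}(1−q)·d₋ h_{k−1}(z₁,z₂) z₁ d₊ φ, where in each summand d₊ maps V₁ → V₂, the operators T₁, z₁, z₂ and h_{k−1}(z₁,z₂) act on V₂, d₋ maps V₂ → V₁, and φ acts on V₁. -/

import Mathlib

/- Common setup: the field K = ℚ(q,t) and the notion of a B_{q,t}-module datum,
i.e. a family of K-vector spaces V_k (k ≥ 0) together with maps d₊ : V_k → V_{k+1},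
d₋ : V_k → V_{k−1}, invertible operators z_i (1 ≤ i ≤ k) and operators T_i
(1 ≤ i ≤ k−1) on V_k (the T_i are invertible as a consequence of the quadratic
Hecke relation, so we record them as units), subject to the defining relations
of the double Dyck path algebra 𝔹_{q,t}.  Operators compose right-to-left;
`Module.End` multiplication is composition. -/

noncomputable section

/-- The field ℚ(q,t). -/
abbrev Kq : Type := FractionRing (MvPolynomial (Fin 2) ℚ)

/-- The variable q ∈ ℚ(q,t). -/
def qv : Kq := algebraMap (MvPolynomial (Fin 2) ℚ) Kq (MvPolynomial.X 0)

/-- The variable t ∈ ℚ(q,t). -/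
def tv : Kq := algebraMap (MvPolynomial (Fin 2) ℚ) Kq (MvPolynomial.X 1)

/-- φ := (q−1)^{−1}(d₊d₋ − d₋d₊), an operator on V_{k+1}. -/
def phiE {V : ℕ → Type*} [∀ k, AddCommGroup (V k)] [∀ k, Module Kq (V k)]
    (dp : ∀ k, V k →ₗ[Kq] V (k + 1)) (dm : ∀ k, V (k + 1) →ₗ[Kq] V k) (k : ℕ) :
    Module.End Kq (V (k + 1)) :=
  (qv - 1)⁻¹ • (dp k ∘ₗ dm k - dm (k + 1) ∘ₗ dp (k + 1))

/-- A B_{q,t}-module datum on the family of K-vector spaces `V`.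
`z k i` is the operator z_i on V_k (meaningful for 1 ≤ i ≤ k) and `T k i` is
the operator T_i on V_k (meaningful for 1 ≤ i ≤ k−1); all relations are imposed
on every V_k on which all their factors are defined. -/
structure BqtDatum (V : ℕ → Type*) [∀ k, AddCommGroup (V k)] [∀ k, Module Kq (V k)] where
  /-- d₊ : V_k → V_{k+1} -/
  dp : ∀ k, V k →ₗ[Kq] V (k + 1)
  /-- d₋ : V_{k+1} → V_k -/
  dm : ∀ k, V (k + 1) →ₗ[Kq] V k
  /-- the pairwise commuting invertible operators z_1, …, z_k on V_k -/
  z : ∀ k, ℕ → (Module.End Kq (V k))ˣ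
  /-- the operators T_1, …, T_{k−1} on V_k -/
  T : ∀ k, ℕ → (Module.End Kq (V k))ˣ
  z_comm : ∀ k i j, 1 ≤ i → i ≤ k → 1 ≤ j → j ≤ k → z k i * z k j = z k j * z k i
  hecke : ∀ k i, 1 ≤ i → i + 1 ≤ k →
    ((T k i : Module.End Kq (V k)) - 1) * ((T k i : Module.End Kq (V k)) + qv • 1) = 0
  braid : ∀ k i, 1 ≤ i → i + 2 ≤ k →
    T k i * T k (i + 1) * T k i = T k (i + 1) * T k i * T k (i + 1)
  T_far : ∀ k i j, 1 ≤ i → i + 1 ≤ k → 1 ≤ j → j + 1 ≤ k → i + 1 < j →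
    T k i * T k j = T k j * T k i
  TzT : ∀ k i, 1 ≤ i → i + 1 ≤ k →
    (((T k i)⁻¹ : (Module.End Kq (V k))ˣ) : Module.End Kq (V k)) *
        (z k (i + 1) : Module.End Kq (V k)) *
        (((T k i)⁻¹ : (Module.End Kq (V k))ˣ) : Module.End Kq (V k)) =
      qv⁻¹ • (z k i : Module.End Kq (V k))
  zT_far : ∀ k i j, 1 ≤ i → i ≤ k → 1 ≤ j → j + 1 ≤ k → i ≠ j → i ≠ j + 1 →
    z k i * T k j = T k j * z k i
  dmdmT : ∀ k, (dm k ∘ₗ dm (k + 1)) ∘ₗ (T (k + 2) (k + 1) : Module.End Kq (V (k + 2))) =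
    dm k ∘ₗ dm (k + 1)
  dmT : ∀ k i, 1 ≤ i → i + 1 ≤ k →
    dm k ∘ₗ (T (k + 1) i : Module.End Kq (V (k + 1))) = (T k i : Module.End Kq (V k)) ∘ₗ dm k
  Tdpdp : ∀ k, (T (k + 2) 1 : Module.End Kq (V (k + 2))) ∘ₗ (dp (k + 1) ∘ₗ dp k) =
    dp (k + 1) ∘ₗ dp k
  dpT : ∀ k i, 1 ≤ i → i + 1 ≤ k →
    dp k ∘ₗ (T k i : Module.End Kq (V k)) = (T (k + 1) (i + 1) : Module.End Kq (V (k + 1))) ∘ₗ dp k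
  phidm : ∀ k, qv • (phiE dp dm k ∘ₗ dm (k + 1)) =
    (dm (k + 1) ∘ₗ phiE dp dm (k + 1)) ∘ₗ (T (k + 2) (k + 1) : Module.End Kq (V (k + 2)))
  Tphidp : ∀ k, (T (k + 2) 1 : Module.End Kq (V (k + 2))) ∘ₗ (phiE dp dm (k + 1) ∘ₗ dp (k + 1)) =
    qv • (dp (k + 1) ∘ₗ phiE dp dm k)
  zdm : ∀ k i, 1 ≤ i → i ≤ k →
    (z k i : Module.End Kq (V k)) ∘ₗ dm k = dm k ∘ₗ (z (k + 1) i : Module.End Kq (V (k + 1)))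
  dpz : ∀ k i, 1 ≤ i → i ≤ k →
    dp k ∘ₗ (z k i : Module.End Kq (V k)) = (z (k + 1) (i + 1) : Module.End Kq (V (k + 1))) ∘ₗ dp k
  zmain : ∀ k, (z (k + 1) 1 : Module.End Kq (V (k + 1))) ∘ₗ
      (qv • (dp k ∘ₗ dm k) - dm (k + 1) ∘ₗ dp (k + 1)) =
    (qv * tv) • ((dp k ∘ₗ dm k - dm (k + 1) ∘ₗ dp (k + 1)) ∘ₗ
      (z (k + 1) (k + 1) : Module.End Kq (V (k + 1))))

namespace BqtDatum

variable {V : ℕ → Type*} [∀ k, AddCommGroup (V k)] [∀ k, Module Kq (V k)]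

/-- e_m := d₋ z₁^m d₊ : V₀ → V₀. -/
def eOp (D : BqtDatum V) (m : ℤ) : Module.End Kq (V 0) :=
  D.dm 0 ∘ₗ ((D.z 1 1 ^ m : (Module.End Kq (V 1))ˣ) : Module.End Kq (V 1)) ∘ₗ D.dp 0

end BqtDatum

namespace BqtDatum

variable {V : ℕ → Type*} [∀ k, AddCommGroup (V k)] [∀ k, Module Kq (V k)]

/-- h_{m−1}(z₁,z₂) as an operator on V₂: Σ_{s=0}^{m−1} z₁^{m−1−s} z₂^s for m > 0,
0 for m = 0, and −(z₁z₂)^m Σ_{s=0}^{−m−1} z₁^{−m−1−s} z₂^s for m < 0; equivalently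
(z₁ − z₂)·h_{m−1}(z₁,z₂) = z₁^m − z₂^m. -/
def hOp (D : BqtDatum V) (m : ℤ) : Module.End Kq (V 2) :=
  if 0 < m then
    ∑ s ∈ Finset.range m.toNat,
      ((D.z 2 1 ^ (m - 1 - (s : ℤ)) * D.z 2 2 ^ (s : ℤ) : (Module.End Kq (V 2))ˣ) :
        Module.End Kq (V 2))
  else if m = 0 then 0
  else
    -((((D.z 2 1 * D.z 2 2) ^ m : (Module.End Kq (V 2))ˣ) : Module.End Kq (V 2)) *
      ∑ s ∈ Finset.range (-m).toNat,
        ((D.z 2 1 ^ (-m - 1 - (s : ℤ)) * D.z 2 2 ^ (s : ℤ) : (Module.End Kq (V 2))ˣ) :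
          Module.End Kq (V 2)))

end BqtDatum

namespace Stmt13Aux

set_option linter.unusedSectionVars false

lemma qv_ne : qv ≠ 0 := by
  simp only [qv, ne_eq, IsFractionRing.to_map_eq_zero_iff]
  exact MvPolynomial.X_ne_zero 0

section Abstract

variable {A : Type*} [Ring A] [Algebra Kq A]

lemma nf {x y : Aˣ} (hc : Commute x y) (k a b : ℤ) :
    (x * y) ^ k * (x ^ a * y ^ b) = x ^ (k + a) * y ^ (k + b) := by
  rw [hc.mul_zpow, mul_assoc, ← mul_assoc (y ^ k), (hc.symm.zpow_zpow k a).eq,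
    mul_assoc, ← zpow_add, ← mul_assoc, ← zpow_add]

lemma nf' {x y : Aˣ} (hc : Commute x y) (a b : ℤ) :
    (x ^ a * y ^ b) * x = x ^ (a + 1) * y ^ b := by
  rw [mul_assoc, ← (hc.zpow_right b).eq, ← mul_assoc, ← zpow_add_one]

/-- generic h operator -/
def hGen (x y : Aˣ) (m : ℤ) : A :=
  if 0 < m then
    ∑ s ∈ Finset.range m.toNat, ((x ^ (m - 1 - (s : ℤ)) * y ^ (s : ℤ) : Aˣ) : A)
  else if m = 0 then 0
  else
    -((((x * y) ^ m : Aˣ) : A) *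
      ∑ s ∈ Finset.range (-m).toNat, ((x ^ (-m - 1 - (s : ℤ)) * y ^ (s : ℤ) : Aˣ) : A))

lemma hGen_zero (x y : Aˣ) : hGen x y 0 = 0 := by simp [hGen]

lemma hGen_succ (x y : Aˣ) (hc : Commute x y) (k : ℤ) :
    hGen x y (k + 1) = hGen x y k * ((x : A)) + ((y ^ k : Aˣ) : A) := by
  rcases lt_trichotomy k 0 with hk | rfl | hk
  · rcases eq_or_lt_of_le (Int.add_one_le_iff.mpr hk) with h1 | hk1
    · -- k = -1
      have hkm : k = -1 := by omega
      subst hkm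
      simp only [hGen]
      norm_num
    · -- k + 1 < 0
      have h1 : ¬ (0:ℤ) < k + 1 := by omega
      have h2 : ¬ (0:ℤ) < k := by omega
      have h3 : k + 1 ≠ 0 := by omega
      have h4 : k ≠ 0 := by omega
      set n := (-(k+1)).toNat with hn
      have htn : (-k).toNat = n + 1 := by omega
      simp only [hGen, if_neg h1, if_neg h2, if_neg h3, if_neg h4, htn]
      rw [Finset.mul_sum, Finset.mul_sum, Finset.sum_range_succ', neg_mul, add_mul,
        Finset.sum_mul]
      have key0 : (((x*y)^k : Aˣ) : A) *
            ((x ^ (-k - 1 - ((0:ℕ):ℤ)) * y ^ ((0:ℕ):ℤ) : Aˣ) : A) * (x : A)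
          = ((y ^ k : Aˣ) : A) := by
        rw [← Units.val_mul, ← Units.val_mul]
        congr 1
        push_cast
        rw [nf hc, nf' hc, show k + (-k - 1 - 0) + 1 = 0 by ring,
          show k + (0:ℤ) = k by ring, zpow_zero, one_mul]
      have keys : ∀ s ∈ Finset.range n,
          ((((x*y)^k : Aˣ) : A) *
              ((x ^ (-k - 1 - ((s+1:ℕ):ℤ)) * y ^ ((s+1:ℕ):ℤ) : Aˣ) : A)) * (x : A)
          = (((x*y)^(k+1) : Aˣ) : A) *
              ((x ^ (-(k+1) - 1 - ((s:ℕ):ℤ)) * y ^ ((s:ℕ):ℤ) : Aˣ) : A) := by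
        intro s _
        rw [← Units.val_mul, ← Units.val_mul, ← Units.val_mul]
        congr 1
        push_cast
        rw [nf hc, nf' hc, nf hc]
        congr 2 <;> ring
      rw [Finset.sum_congr rfl keys, key0]
      abel
  · simp [hGen]
  · -- k > 0
    have hk1 : (0:ℤ) < k + 1 := by omega
    have htn : (k + 1).toNat = k.toNat + 1 := by omega
    have hkz : ((k.toNat : ℤ)) = k := Int.toNat_of_nonneg hk.le
    simp only [hGen, if_pos hk1, if_pos hk, htn]
    rw [Finset.sum_range_succ, hkz]
    have hlast : (x ^ (k + 1 - 1 - k) * y ^ k : Aˣ) = y ^ k := by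
      norm_num
    rw [hlast]
    congr 1
    rw [Finset.sum_mul]
    refine Finset.sum_congr rfl fun s _ => ?_
    have h : (x ^ (k - 1 - (s:ℤ)) * y ^ (s:ℤ) : Aˣ) * x
        = x ^ (k + 1 - 1 - (s:ℤ)) * y ^ (s:ℤ) := by
      rw [nf' hc]; congr 1; ring
    calc ((x ^ (k + 1 - 1 - (s:ℤ)) * y ^ (s:ℤ) : Aˣ) : A)
        = (((x ^ (k - 1 - (s:ℤ)) * y ^ (s:ℤ) : Aˣ) * x : Aˣ) : A) := by rw [h]
      _ = ((x ^ (k - 1 - (s:ℤ)) * y ^ (s:ℤ) : Aˣ) : A) * (x : A) := by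
          rw [Units.val_mul]

lemma keyA (T x y : Aˣ) (hc : Commute x y)
    (base : (y : A) * ((T⁻¹ : Aˣ) : A)
      = ((T⁻¹ : Aˣ) : A) * (x : A) + (qv⁻¹ * (1 - qv)) • (x : A)) (k : ℤ) :
    ((y ^ k : Aˣ) : A) * ((T⁻¹ : Aˣ) : A)
      = ((T⁻¹ : Aˣ) : A) * ((x ^ k : Aˣ) : A)
        + (qv⁻¹ * (1 - qv)) • (hGen x y k * (x : A)) := by
  have step : ∀ m : ℤ,
      (((y ^ (m+1) : Aˣ) : A) * ((T⁻¹ : Aˣ) : A)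
        = ((T⁻¹ : Aˣ) : A) * ((x ^ (m+1) : Aˣ) : A)
          + (qv⁻¹ * (1 - qv)) • (hGen x y (m+1) * (x : A)))
      ↔ (((y ^ m : Aˣ) : A) * ((T⁻¹ : Aˣ) : A)
        = ((T⁻¹ : Aˣ) : A) * ((x ^ m : Aˣ) : A)
          + (qv⁻¹ * (1 - qv)) • (hGen x y m * (x : A))) := by
    intro m
    have lhs_eq : ((y ^ (m+1) : Aˣ) : A) * ((T⁻¹ : Aˣ) : A)
        = (((y ^ m : Aˣ) : A) * ((T⁻¹ : Aˣ) : A)) * (x : A)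
          + (qv⁻¹ * (1 - qv)) • (((y ^ m : Aˣ) : A) * (x : A)) := by
      rw [zpow_add_one, Units.val_mul, mul_assoc, base, mul_add, mul_smul_comm,
        ← mul_assoc]
    have rhs_eq : ((T⁻¹ : Aˣ) : A) * ((x ^ (m+1) : Aˣ) : A)
          + (qv⁻¹ * (1 - qv)) • (hGen x y (m+1) * (x : A))
        = (((T⁻¹ : Aˣ) : A) * ((x ^ m : Aˣ) : A)
            + (qv⁻¹ * (1 - qv)) • (hGen x y m * (x : A))) * (x : A)
          + (qv⁻¹ * (1 - qv)) • (((y ^ m : Aˣ) : A) * (x : A)) := by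
      simp only [zpow_add_one, Units.val_mul, hGen_succ x y hc m, add_mul,
        smul_mul_assoc, smul_add, mul_assoc]
      abel
    rw [lhs_eq, rhs_eq]
    constructor
    · intro hh
      have h2 := add_right_cancel hh
      exact (x.isUnit.mul_right_cancel h2)
    · intro hh
      rw [hh]
  induction k using Int.induction_on with
  | zero => simp [hGen_zero]
  | succ n ih => exact (step n).mpr ih
  | pred n ih =>
      have hs := step (-(n:ℤ) - 1)
      rw [show (-(n:ℤ) - 1) + 1 = -(n:ℤ) by ring] at hs
      exact hs.mp ih

end Abstract

end Stmt13Aux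

namespace Stmt13Aux

variable {V : ℕ → Type*} [∀ k, AddCommGroup (V k)] [∀ k, Module Kq (V k)] (D : BqtDatum V)

lemma hcz : Commute (D.z 2 1) (D.z 2 2) :=
  D.z_comm 2 1 2 le_rfl one_le_two one_le_two le_rfl

lemma hOp_eq (k : ℤ) : BqtDatum.hOp D k = hGen (D.z 2 1) (D.z 2 2) k := rfl

/-- T in terms of T-inverse -/
lemma Trep : ((D.T 2 1 : (Module.End Kq (V 2))ˣ) : Module.End Kq (V 2))
    = (1 - qv) • (1 : Module.End Kq (V 2))
      + qv • (((D.T 2 1)⁻¹ : (Module.End Kq (V 2))ˣ) : Module.End Kq (V 2)) := by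
  have hh := D.hecke 2 1 le_rfl (by norm_num)
  have h0 : (((D.T 2 1 : (Module.End Kq (V 2))ˣ) : Module.End Kq (V 2)) - 1)
        * ((↑(D.T 2 1) : Module.End Kq (V 2)) + qv • 1)
      = ((D.T 2 1 : (Module.End Kq (V 2))ˣ) : Module.End Kq (V 2)) * ↑(D.T 2 1)
        - ((1 - qv) • (↑(D.T 2 1) : Module.End Kq (V 2)) + qv • (1 : Module.End Kq (V 2))) := by
    simp only [sub_mul, mul_add, one_mul, mul_one, mul_smul_comm, smul_sub, smul_add]
    rw [sub_smul, one_smul]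
    abel
  have hT2 : ((D.T 2 1 : (Module.End Kq (V 2))ˣ) : Module.End Kq (V 2)) * ↑(D.T 2 1)
      = (1 - qv) • (↑(D.T 2 1) : Module.End Kq (V 2)) + qv • (1 : Module.End Kq (V 2)) := by
    rw [← sub_eq_zero, ← h0, hh]
  calc ((D.T 2 1 : (Module.End Kq (V 2))ˣ) : Module.End Kq (V 2))
      = (((D.T 2 1)⁻¹ : (Module.End Kq (V 2))ˣ) : Module.End Kq (V 2))
          * ((↑(D.T 2 1) : Module.End Kq (V 2)) * ↑(D.T 2 1)) := by
        rw [← mul_assoc, Units.inv_mul, one_mul]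
    _ = (((D.T 2 1)⁻¹ : (Module.End Kq (V 2))ˣ) : Module.End Kq (V 2))
          * ((1 - qv) • (↑(D.T 2 1) : Module.End Kq (V 2))
            + qv • (1 : Module.End Kq (V 2))) := by rw [hT2]
    _ = (1 - qv) • ((((D.T 2 1)⁻¹ : (Module.End Kq (V 2))ˣ) : Module.End Kq (V 2))
            * ↑(D.T 2 1))
          + qv • ((((D.T 2 1)⁻¹ : (Module.End Kq (V 2))ˣ) : Module.End Kq (V 2)) * 1) := by
        rw [mul_add, mul_smul_comm, mul_smul_comm]
    _ = (1 - qv) • (1 : Module.End Kq (V 2))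
          + qv • (((D.T 2 1)⁻¹ : (Module.End Kq (V 2))ˣ) : Module.End Kq (V 2)) := by
        rw [Units.inv_mul, mul_one]

lemma baseRel :
    ((D.z 2 2 : (Module.End Kq (V 2))ˣ) : Module.End Kq (V 2)) *
        (((D.T 2 1)⁻¹ : (Module.End Kq (V 2))ˣ) : Module.End Kq (V 2))
    = (((D.T 2 1)⁻¹ : (Module.End Kq (V 2))ˣ) : Module.End Kq (V 2)) *
        ((D.z 2 1 : (Module.End Kq (V 2))ˣ) : Module.End Kq (V 2))
      + (qv⁻¹ * (1 - qv)) • ((D.z 2 1 : (Module.End Kq (V 2))ˣ) : Module.End Kq (V 2)) := by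
  have hTzT := D.TzT 2 1 le_rfl (by norm_num)
  norm_num at hTzT
  have h5 : ((D.z 2 2 : (Module.End Kq (V 2))ˣ) : Module.End Kq (V 2)) *
        (((D.T 2 1)⁻¹ : (Module.End Kq (V 2))ˣ) : Module.End Kq (V 2))
      = qv⁻¹ • (((D.T 2 1 : (Module.End Kq (V 2))ˣ) : Module.End Kq (V 2)) *
          ((D.z 2 1 : (Module.End Kq (V 2))ˣ) : Module.End Kq (V 2))) := by
    calc ((D.z 2 2 : (Module.End Kq (V 2))ˣ) : Module.End Kq (V 2)) *
          (((D.T 2 1)⁻¹ : (Module.End Kq (V 2))ˣ) : Module.End Kq (V 2))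
        = (((D.T 2 1 : (Module.End Kq (V 2))ˣ) : Module.End Kq (V 2)) * ↑(D.T 2 1)⁻¹)
            * (((D.z 2 2 : (Module.End Kq (V 2))ˣ) : Module.End Kq (V 2)) * ↑(D.T 2 1)⁻¹) := by
          rw [Units.mul_inv, one_mul]
      _ = ((D.T 2 1 : (Module.End Kq (V 2))ˣ) : Module.End Kq (V 2)) *
            ((((D.T 2 1)⁻¹ : (Module.End Kq (V 2))ˣ) : Module.End Kq (V 2)) *
              ((D.z 2 2 : (Module.End Kq (V 2))ˣ) : Module.End Kq (V 2)) * ↑(D.T 2 1)⁻¹) := by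
          rw [mul_assoc, ← mul_assoc (((D.T 2 1)⁻¹ : (Module.End Kq (V 2))ˣ) :
            Module.End Kq (V 2))]
      _ = ((D.T 2 1 : (Module.End Kq (V 2))ˣ) : Module.End Kq (V 2)) *
            (qv⁻¹ • ((D.z 2 1 : (Module.End Kq (V 2))ˣ) : Module.End Kq (V 2))) := by
          rw [hTzT]
      _ = qv⁻¹ • (((D.T 2 1 : (Module.End Kq (V 2))ˣ) : Module.End Kq (V 2)) *
            ((D.z 2 1 : (Module.End Kq (V 2))ˣ) : Module.End Kq (V 2))) := by
          rw [mul_smul_comm]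
  rw [h5, Trep D, add_mul, smul_mul_assoc, one_mul, smul_mul_assoc, smul_add, smul_smul,
    smul_smul, inv_mul_cancel₀ qv_ne, one_smul, add_comm]

/-- φ on V₂ intertwines z₁ to z₂. -/
lemma phi1_z : (phiE D.dp D.dm 1) * ((D.z 2 1 : (Module.End Kq (V 2))ˣ) : Module.End Kq (V 2))
    = ((D.z 2 2 : (Module.End Kq (V 2))ˣ) : Module.End Kq (V 2)) * phiE D.dp D.dm 1 := by
  unfold phiE
  rw [smul_mul_assoc, mul_smul_comm]
  congr 1
  rw [sub_mul, mul_sub]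
  congr 1
  · rw [Module.End.mul_eq_comp, Module.End.mul_eq_comp, LinearMap.comp_assoc,
      ← D.zdm 1 1 le_rfl le_rfl, ← LinearMap.comp_assoc, D.dpz 1 1 le_rfl le_rfl,
      LinearMap.comp_assoc]
  · rw [Module.End.mul_eq_comp, Module.End.mul_eq_comp, LinearMap.comp_assoc,
      D.dpz 2 1 le_rfl one_le_two, ← LinearMap.comp_assoc,
      ← D.zdm 2 2 one_le_two le_rfl, LinearMap.comp_assoc]

end Stmt13Aux

open BqtDatum in
/-- φ d₋ T₁⁻¹ z₁^k d₊ = d₋ T₁⁻¹ z₁^k d₊ φ + q⁻¹(1−q)·d₋ h_{k−1}(z₁,z₂) z₁ d₊ φ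
as operators V₁ → V₁. -/
theorem stmt13 (V : ℕ → Type*) [∀ k, AddCommGroup (V k)] [∀ k, Module Kq (V k)]
    (D : BqtDatum V) (k : ℤ) :
    phiE D.dp D.dm 0 ∘ₗ
      (D.dm 1 ∘ₗ
        ((((D.T 2 1)⁻¹ : (Module.End Kq (V 2))ˣ) : Module.End Kq (V 2)) *
          ((D.z 2 1 ^ k : (Module.End Kq (V 2))ˣ) : Module.End Kq (V 2))) ∘ₗ D.dp 1) =
    (D.dm 1 ∘ₗ
        ((((D.T 2 1)⁻¹ : (Module.End Kq (V 2))ˣ) : Module.End Kq (V 2)) *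
          ((D.z 2 1 ^ k : (Module.End Kq (V 2))ˣ) : Module.End Kq (V 2))) ∘ₗ D.dp 1) ∘ₗ
      phiE D.dp D.dm 0 +
    (qv⁻¹ * (1 - qv)) •
      ((D.dm 1 ∘ₗ (hOp D k * (D.z 2 1 : Module.End Kq (V 2))) ∘ₗ D.dp 1) ∘ₗ
        phiE D.dp D.dm 0) := by
  set Φ0 := phiE D.dp D.dm 0 with hΦ0
  set Φ1 := phiE D.dp D.dm 1 with hΦ1
  set t : Module.End Kq (V 2) := ((D.T 2 1 : (Module.End Kq (V 2))ˣ) : Module.End Kq (V 2))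
    with ht
  set ti : Module.End Kq (V 2) :=
    (((D.T 2 1)⁻¹ : (Module.End Kq (V 2))ˣ) : Module.End Kq (V 2)) with hti
  set z1k : Module.End Kq (V 2) :=
    ((D.z 2 1 ^ k : (Module.End Kq (V 2))ˣ) : Module.End Kq (V 2)) with hz1k
  set z2k : Module.End Kq (V 2) :=
    ((D.z 2 2 ^ k : (Module.End Kq (V 2))ˣ) : Module.End Kq (V 2)) with hz2k
  set H : Module.End Kq (V 2) :=
    hOp D k * ((D.z 2 1 : (Module.End Kq (V 2))ˣ) : Module.End Kq (V 2)) with hH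
  have key : z2k * ti = ti * z1k + (qv⁻¹ * (1 - qv)) • H :=
    Stmt13Aux.keyA (D.T 2 1) (D.z 2 1) (D.z 2 2) (Stmt13Aux.hcz D) (Stmt13Aux.baseRel D) k
  have hsc : SemiconjBy Φ1 ((D.z 2 1 : (Module.End Kq (V 2))ˣ) : Module.End Kq (V 2))
      ((D.z 2 2 : (Module.End Kq (V 2))ˣ) : Module.End Kq (V 2)) := Stmt13Aux.phi1_z D
  have hsemi : Φ1 * z1k = z2k * Φ1 := hsc.units_zpow_right k
  have s1 : Φ0 ∘ₗ D.dm 1 = qv⁻¹ • ((D.dm 1 ∘ₗ Φ1) ∘ₗ t) := by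
    have h : qv • (Φ0 ∘ₗ D.dm 1) = (D.dm 1 ∘ₗ Φ1) ∘ₗ t := D.phidm 0
    rw [← h, inv_smul_smul₀ Stmt13Aux.qv_ne]
  have h2 : t ∘ₗ (Φ1 ∘ₗ D.dp 1) = qv • (D.dp 1 ∘ₗ Φ0) := D.Tphidp 0
  have s2 : Φ1 ∘ₗ D.dp 1 = qv • (ti ∘ₗ (D.dp 1 ∘ₗ Φ0)) := by
    calc Φ1 ∘ₗ D.dp 1 = ((ti * t : Module.End Kq (V 2))) ∘ₗ (Φ1 ∘ₗ D.dp 1) := by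
          rw [ht, hti, Units.inv_mul]
          rfl
      _ = ti ∘ₗ (t ∘ₗ (Φ1 ∘ₗ D.dp 1)) := rfl
      _ = ti ∘ₗ (qv • (D.dp 1 ∘ₗ Φ0)) := by rw [h2]
      _ = qv • (ti ∘ₗ (D.dp 1 ∘ₗ Φ0)) := by rw [LinearMap.comp_smul]
  calc Φ0 ∘ₗ (D.dm 1 ∘ₗ ((ti * z1k) ∘ₗ D.dp 1))
      = (Φ0 ∘ₗ D.dm 1) ∘ₗ ((ti * z1k) ∘ₗ D.dp 1) := rfl
    _ = (qv⁻¹ • ((D.dm 1 ∘ₗ Φ1) ∘ₗ t)) ∘ₗ ((ti * z1k) ∘ₗ D.dp 1) := by rw [s1]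
    _ = qv⁻¹ • (((D.dm 1 ∘ₗ Φ1) ∘ₗ t) ∘ₗ ((ti * z1k) ∘ₗ D.dp 1)) := by
        rw [LinearMap.smul_comp]
    _ = qv⁻¹ • (D.dm 1 ∘ₗ ((Φ1 * (t * (ti * z1k))) ∘ₗ D.dp 1)) := rfl
    _ = qv⁻¹ • (D.dm 1 ∘ₗ ((Φ1 * z1k) ∘ₗ D.dp 1)) := by
        rw [← mul_assoc t ti z1k, show t * ti = 1 by rw [ht, hti]; exact Units.mul_inv _,
          one_mul]
    _ = qv⁻¹ • (D.dm 1 ∘ₗ ((z2k * Φ1) ∘ₗ D.dp 1)) := by rw [hsemi]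
    _ = qv⁻¹ • (D.dm 1 ∘ₗ (z2k ∘ₗ (Φ1 ∘ₗ D.dp 1))) := rfl
    _ = qv⁻¹ • (D.dm 1 ∘ₗ (z2k ∘ₗ (qv • (ti ∘ₗ (D.dp 1 ∘ₗ Φ0))))) := by rw [s2]
    _ = qv⁻¹ • (qv • (D.dm 1 ∘ₗ (z2k ∘ₗ (ti ∘ₗ (D.dp 1 ∘ₗ Φ0))))) := by
        rw [LinearMap.comp_smul, LinearMap.comp_smul]
    _ = D.dm 1 ∘ₗ ((z2k * ti) ∘ₗ (D.dp 1 ∘ₗ Φ0)) := by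
        rw [smul_smul, inv_mul_cancel₀ Stmt13Aux.qv_ne, one_smul]; rfl
    _ = D.dm 1 ∘ₗ ((ti * z1k + (qv⁻¹ * (1 - qv)) • H) ∘ₗ (D.dp 1 ∘ₗ Φ0)) := by rw [key]
    _ = D.dm 1 ∘ₗ ((ti * z1k) ∘ₗ (D.dp 1 ∘ₗ Φ0))
          + (qv⁻¹ * (1 - qv)) • (D.dm 1 ∘ₗ (H ∘ₗ (D.dp 1 ∘ₗ Φ0))) := by
        rw [LinearMap.add_comp, LinearMap.smul_comp, LinearMap.comp_add, LinearMap.comp_smul]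
    _ = (D.dm 1 ∘ₗ ((ti * z1k) ∘ₗ D.dp 1)) ∘ₗ Φ0
          + (qv⁻¹ * (1 - qv)) • ((D.dm 1 ∘ₗ (H ∘ₗ D.dp 1)) ∘ₗ Φ0) := rfl

end
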